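/- Let α ∈ (0,1), m ∈ ℕ, and consider sectors indexed by j ∈ {1,…,m} together with an investment sector x. For each sector s ∈ {1,…,m,x} let k_s > 0, n_s > 0, A_s > 0, p_s > 0, and let R > 0, w > 0 satisfy the first-order conditions p_s · α (k_s/n_s)^{α−1} A_s^{1−α} = R and p_s · (1−α) (k_s/n_s)^{α} A_s^{1−α} = w. Assume market clearing k_x + Σ_{j=1}^m k_j = k and n_x + Σ_{j=1}^m n_j = 1 with k > 0, and normalize p_x = 1. Then R = α k^{α−1} A_x^{1−α}, w = (1−α) k^{α} A_x^{1−α}, and p_j = (A_x/A_j)^{1−α} for every j ∈ {1,…,m}. -/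
import Mathlib


/-!
Closed-form equilibrium factor and goods prices in the
Herrendorf–Rogerson–Valentinyi balanced growth model (section 6.2): with `m`
consumption sectors and an investment sector `x`, common capital share `α`,
sector-specific technologies `A_s`, profit-maximization first-order conditions in
every sector, market clearing `k_x + Σ_j k_j = k`, `n_x + Σ_j n_j = 1`, and the
normalization `p_x = 1`, one has `R = α k^{α−1} A_x^{1−α}`,
`w = (1−α) k^α A_x^{1−α}`, and `p_j = (A_x/A_j)^{1−α}`.
All powers are real powers of positive real numbers.
-/

open Real Set

theorem hrv_equilibrium_prices (α : ℝ) (hα : α ∈ Ioo (0 : ℝ) 1) (m : ℕ)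
    (kc nc A p : Fin m → ℝ) (kx nx Ax px : ℝ) (R w k : ℝ)
    (hkc : ∀ j, 0 < kc j) (hnc : ∀ j, 0 < nc j)
    (hA : ∀ j, 0 < A j) (hp : ∀ j, 0 < p j)
    (hkx : 0 < kx) (hnx : 0 < nx) (hAx : 0 < Ax)
    (hR : 0 < R) (hw : 0 < w) (hk : 0 < k)
    -- first-order conditions in the m consumption sectors
    (hFOCk : ∀ j, p j * (α * (kc j / nc j) ^ (α - 1) * A j ^ (1 - α)) = R)
    (hFOCn : ∀ j, p j * ((1 - α) * (kc j / nc j) ^ α * A j ^ (1 - α)) = w)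
    -- first-order conditions in the investment sector
    (hFOCkx : px * (α * (kx / nx) ^ (α - 1) * Ax ^ (1 - α)) = R)
    (hFOCnx : px * ((1 - α) * (kx / nx) ^ α * Ax ^ (1 - α)) = w)
    -- market clearing and price normalization
    (hkclear : kx + ∑ j, kc j = k) (hnclear : nx + ∑ j, nc j = 1)
    (hpx : px = 1) :
    R = α * k ^ (α - 1) * Ax ^ (1 - α) ∧
      w = (1 - α) * k ^ α * Ax ^ (1 - α) ∧
      ∀ j, p j = (Ax / A j) ^ (1 - α) := by
  obtain ⟨hα0, hα1⟩ := hα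
  have h1α : (0:ℝ) < 1 - α := by linarith
  set c := α * w / ((1 - α) * R) with hc
  -- in every sector the capital-labor ratio equals c
  have key : ∀ (ks ns As ps : ℝ), 0 < ks → 0 < ns → 0 < As →
      ps * (α * (ks / ns) ^ (α - 1) * As ^ (1 - α)) = R →
      ps * ((1 - α) * (ks / ns) ^ α * As ^ (1 - α)) = w → ks / ns = c := by
    intro ks ns As ps hks hns hAs hFk hFn
    have hr : 0 < ks / ns := div_pos hks hns
    have hpow : (ks / ns) ^ α = (ks / ns) ^ (α - 1) * (ks / ns) := by
      rw [← Real.rpow_add_one hr.ne' (α - 1)]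
      ring_nf
    rw [hpow] at hFn
    have hmain : (1 - α) * (ks / ns) * R = α * w := by
      rw [← hFk, ← hFn]; ring
    rw [hc, eq_div_iff (by positivity : ((1 - α) * R) ≠ 0)]
    linear_combination hmain
  have hcj : ∀ j, kc j = c * nc j := fun j =>
    (div_eq_iff (hnc j).ne').mp
      (key (kc j) (nc j) (A j) (p j) (hkc j) (hnc j) (hA j) (hFOCk j) (hFOCn j))
  have hcx : kx = c * nx :=
    (div_eq_iff hnx.ne').mp (key kx nx Ax px hkx hnx hAx hFOCkx hFOCnx)
  have hkeq : k = c := by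
    have : kx + ∑ j, kc j = c * (nx + ∑ j, nc j) := by
      rw [mul_add, Finset.mul_sum, hcx]
      simp [hcj]
    rw [hkclear, hnclear, mul_one] at this
    exact this
  have hxk : kx / nx = k := by
    rw [div_eq_iff hnx.ne', hkeq, hcx]
  have hjk : ∀ j, kc j / nc j = k := fun j => by
    rw [div_eq_iff (hnc j).ne', hkeq, hcj j]
  rw [hpx, one_mul, hxk] at hFOCkx hFOCnx
  refine ⟨hFOCkx.symm, hFOCnx.symm, fun j => ?_⟩
  have h := hFOCk j
  rw [hjk j, ← hFOCkx] at h
  have hAj : (0:ℝ) < A j ^ (1 - α) := Real.rpow_pos_of_pos (hA j) _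
  have hden : (0:ℝ) < α * k ^ (α - 1) :=
    mul_pos hα0 (Real.rpow_pos_of_pos hk _)
  have hpj : p j = Ax ^ (1 - α) / A j ^ (1 - α) := by
    rw [eq_div_iff hAj.ne']
    have h' : α * k ^ (α - 1) * (p j * A j ^ (1 - α)) =
        α * k ^ (α - 1) * Ax ^ (1 - α) := by linear_combination h
    exact mul_left_cancel₀ hden.ne' h'
  rw [hpj, Real.div_rpow hAx.le (hA j).le]
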